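/- Fix −3/2 < s < 1/2 and set ω(β) := ⟨β⟩^s |β|^{1/2} for β ∈ ℝ. Then ω is a Muckenhoupt A₂ weight: there exists a constant C > 0 such that for every bounded interval I = [a,b] ⊂ ℝ with a < b, ( (1/(b−a)) ∫_a^b ω(β) dβ ) · ( (1/(b−a)) ∫_a^b ω(β)^{−1} dβ ) ≤ C. -/

import Mathlib

open MeasureTheory
open scoped ENNReal

/-- Japanese bracket `⟨x⟩ = (1 + x²)^{1/2}`. -/
noncomputable def jap (x : ℝ) : ℝ := Real.sqrt (1 + x ^ 2)

/-!
Write `M = max |a| |b|` and `L = b - a`. If `M ≤ 2L`, enlarge `[a, b]` to `[-M, M]`. On `(0, M]`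
one has `⟨x⟩ ≥ (x / M) ⟨M⟩`, so `⟨x⟩^t |x|^p` is dominated by `M^(t⁻) ⟨M⟩^t x^(p - t⁻)` with
`t⁻ = max (-t) 0`, which is integrable at `0` as soon as `p > -1` and `t + p > -1`; this gives
`∫_{-M}^{M} ω ≲ M ω(M)` and, as `ω⁻¹` is of the same form, `∫_{-M}^{M} ω⁻¹ ≲ M ω(M)⁻¹`, so the
product of the averages is `≲ (M / L)² ≤ 4`. If `M > 2L`, then `M / 2 < |x| ≤ M` on `[a, b]`,
where both `ω` and `ω⁻¹` stay within a constant factor of their values at `M`.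
-/

open Set

lemma jap_pos (x : ℝ) : 0 < jap x := Real.sqrt_pos.2 (by positivity)

lemma sq_jap (x : ℝ) : jap x ^ 2 = 1 + x ^ 2 := Real.sq_sqrt (by positivity)

lemma jap_neg (x : ℝ) : jap (-x) = jap x := by simp [jap]

lemma jap_le_jap {x y : ℝ} (hx : 0 ≤ x) (hxy : x ≤ y) : jap x ≤ jap y :=
  Real.sqrt_le_sqrt (by nlinarith)

lemma jap_le_two_mul {x y : ℝ} (h : |x| ≤ 2 * |y|) : jap x ≤ 2 * jap y := by
  rw [jap, Real.sqrt_le_iff, mul_pow, sq_jap]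
  refine ⟨by positivity [jap_pos y], ?_⟩
  nlinarith [sq_abs x, sq_abs y, abs_nonneg x]

lemma mul_jap_le_mul_jap {x M : ℝ} (hx : 0 ≤ x) (hxM : x ≤ M) : x * jap M ≤ M * jap x := by
  have hM : 0 ≤ M := hx.trans hxM
  rw [← pow_le_pow_iff_left₀ (by positivity [jap_pos M]) (by positivity [jap_pos x]) two_ne_zero,
    mul_pow, mul_pow, sq_jap, sq_jap]
  nlinarith [mul_le_mul hxM hxM hx hM]

lemma jap_rpow_le {t x M : ℝ} (hx : 0 < x) (hxM : x ≤ M) :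
    jap x ^ t ≤ (x / M) ^ min t 0 * jap M ^ t := by
  rcases le_total 0 t with ht | ht
  · rw [min_eq_right ht, Real.rpow_zero, one_mul]
    exact Real.rpow_le_rpow (jap_pos x).le (jap_le_jap hx.le hxM) ht
  · have hM : 0 < M := hx.trans_le hxM
    rw [min_eq_left ht, ← Real.mul_rpow (by positivity) (jap_pos M).le]
    refine Real.rpow_le_rpow_of_nonpos (by positivity [jap_pos M]) ?_ ht
    rw [div_mul_eq_mul_div, div_le_iff₀ hM, mul_comm (jap x)]
    exact mul_jap_le_mul_jap hx.le hxM

lemma rpow_le_two_rpow_abs_mul {u v e : ℝ} (hv : 0 < v) (huv : u ≤ 2 * v) (hvu : v ≤ 2 * u) :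
    u ^ e ≤ 2 ^ |e| * v ^ e := by
  have hu : 0 < u := by linarith
  rcases le_total 0 e with he | he
  · rw [abs_of_nonneg he, ← Real.mul_rpow zero_le_two hv.le]
    exact Real.rpow_le_rpow hu.le huv he
  · rw [abs_of_nonpos he, Real.rpow_neg zero_le_two, ← Real.inv_rpow zero_le_two,
      ← Real.mul_rpow (by norm_num) hv.le]
    exact Real.rpow_le_rpow_of_nonpos (by positivity) (by linarith) he

lemma setLIntegral_Ioc_neg_zero {f : ℝ → ℝ≥0∞} (hf : ∀ x, f (-x) = f x) (M : ℝ) :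
    ∫⁻ x in Ioc (-M) 0, f x = ∫⁻ x in Ico 0 M, f x := by
  rw [← lintegral_indicator measurableSet_Ioc, ← lintegral_indicator measurableSet_Ico,
    ← lintegral_neg_eq_self]
  congr 1 with x
  simp only [indicator, mem_Ioc, mem_Ico, hf, neg_lt_neg_iff, neg_nonpos, and_comm]

lemma setLIntegral_Ioc_neg_le_two_mul {f : ℝ → ℝ≥0∞} (hf : ∀ x, f (-x) = f x) (M : ℝ) :
    ∫⁻ x in Ioc (-M) M, f x ≤ 2 * ∫⁻ x in Ioc 0 M, f x := by
  have hsub : Ioc (-M) M ⊆ Ioc (-M) 0 ∪ Ioc 0 M := fun x hx => by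
    rcases le_or_gt x 0 with h | h
    exacts [Or.inl ⟨hx.1, h⟩, Or.inr ⟨h, hx.2⟩]
  calc ∫⁻ x in Ioc (-M) M, f x ≤ ∫⁻ x in Ioc (-M) 0 ∪ Ioc 0 M, f x := lintegral_mono_set hsub
    _ ≤ (∫⁻ x in Ioc (-M) 0, f x) + ∫⁻ x in Ioc 0 M, f x := lintegral_union_le _ _ _
    _ = 2 * ∫⁻ x in Ioc 0 M, f x := by
      rw [setLIntegral_Ioc_neg_zero hf, setLIntegral_congr Ico_ae_eq_Ioc, two_mul]

lemma setLIntegral_Ioc_zero_rpow {r M : ℝ} (hr : -1 < r) (hM : 0 ≤ M) :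
    ∫⁻ x in Ioc 0 M, ENNReal.ofReal (x ^ r) = ENNReal.ofReal (M ^ (r + 1) / (r + 1)) := by
  have hint : IntegrableOn (fun x : ℝ => x ^ r) (Ioc 0 M) :=
    (intervalIntegrable_iff_integrableOn_Ioc_of_le hM).mp
      (intervalIntegral.intervalIntegrable_rpow' hr)
  rw [← ofReal_integral_eq_lintegral_ofReal hint
    (ae_restrict_of_forall_mem measurableSet_Ioc fun x hx => Real.rpow_nonneg hx.1.le r),
    ← intervalIntegral.integral_of_le hM, integral_rpow (Or.inl hr),
    Real.zero_rpow (by linarith), sub_zero]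

noncomputable def japWeight (t p x : ℝ) : ℝ := jap x ^ t * |x| ^ p

lemma japWeight_nonneg (t p x : ℝ) : 0 ≤ japWeight t p x := by
  unfold japWeight; positivity [jap_pos x]

lemma japWeight_neg (t p x : ℝ) : japWeight t p (-x) = japWeight t p x := by
  simp only [japWeight, jap_neg, abs_neg]

lemma inv_japWeight (t p : ℝ) : (fun x => (japWeight t p x)⁻¹) = japWeight (-t) (-p) := by
  ext x
  rw [japWeight, japWeight, mul_inv, Real.rpow_neg (jap_pos x).le, Real.rpow_neg (abs_nonneg x)]

lemma japWeight_le_rpow {t p x M : ℝ} (hx : 0 < x) (hxM : x ≤ M) :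
    japWeight t p x ≤ M ^ (-min t 0) * jap M ^ t * x ^ (p + min t 0) := by
  have hM : 0 < M := hx.trans_le hxM
  calc japWeight t p x ≤ (x / M) ^ min t 0 * jap M ^ t * x ^ p := by
        rw [japWeight, abs_of_pos hx]
        gcongr
        exact jap_rpow_le hx hxM
    _ = M ^ (-min t 0) * jap M ^ t * x ^ (p + min t 0) := by
        rw [Real.div_rpow hx.le hM.le, Real.rpow_neg hM.le, Real.rpow_add hx]
        ring

lemma setLIntegral_japWeight_le {t p M : ℝ} (hp : -1 < p + min t 0) (hM : 0 < M) :
    ∫⁻ x in Ioc (-M) M, ENNReal.ofReal (japWeight t p x) ≤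
      ENNReal.ofReal (2 / (p + min t 0 + 1) * M * japWeight t p M) := by
  set q := min t 0
  have hq : 0 < p + q + 1 := by linarith
  have hMpow : M ^ (-q) * M ^ (p + q + 1) = M * |M| ^ p := by
    rw [← Real.rpow_add hM, show -q + (p + q + 1) = p + 1 by ring, Real.rpow_add_one hM.ne',
      abs_of_pos hM, mul_comm]
  calc ∫⁻ x in Ioc (-M) M, ENNReal.ofReal (japWeight t p x)
      ≤ 2 * ∫⁻ x in Ioc 0 M, ENNReal.ofReal (japWeight t p x) :=
        setLIntegral_Ioc_neg_le_two_mul (fun x => by rw [japWeight_neg]) M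
    _ ≤ 2 * ∫⁻ x in Ioc 0 M,
          ENNReal.ofReal (M ^ (-q) * jap M ^ t) * ENNReal.ofReal (x ^ (p + q)) := by
        gcongr 2 * ?_
        refine setLIntegral_mono' measurableSet_Ioc fun x hx => ?_
        rw [← ENNReal.ofReal_mul (by positivity [jap_pos M])]
        exact ENNReal.ofReal_le_ofReal (japWeight_le_rpow hx.1 hx.2)
    _ = ENNReal.ofReal (2 * (M ^ (-q) * jap M ^ t * (M ^ (p + q + 1) / (p + q + 1)))) := by
        rw [lintegral_const_mul' _ _ ENNReal.ofReal_ne_top,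
          setLIntegral_Ioc_zero_rpow (by linarith) hM.le,
          ← ENNReal.ofReal_mul (by positivity [jap_pos M]),
          ENNReal.ofReal_mul zero_le_two, ENNReal.ofReal_ofNat]
    _ = ENNReal.ofReal (2 / (p + q + 1) * M * japWeight t p M) := by
        congr 1
        calc _ = 2 / (p + q + 1) * (M ^ (-q) * M ^ (p + q + 1)) * jap M ^ t := by ring
          _ = _ := by rw [hMpow, japWeight]; ring

lemma japWeight_le_of_comparable {t p x y : ℝ} (hy : 0 < |y|) (hxy : |x| ≤ 2 * |y|)
    (hyx : |y| ≤ 2 * |x|) : japWeight t p x ≤ 2 ^ (|t| + |p|) * japWeight t p y := by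
  calc japWeight t p x ≤ (2 ^ |t| * jap y ^ t) * (2 ^ |p| * |y| ^ p) := by
        unfold japWeight
        gcongr
        · positivity [jap_pos y]
        · exact rpow_le_two_rpow_abs_mul (jap_pos y) (jap_le_two_mul hxy) (jap_le_two_mul hyx)
        · exact rpow_le_two_rpow_abs_mul hy hxy hyx
    _ = 2 ^ (|t| + |p|) * japWeight t p y := by
        rw [japWeight, Real.rpow_add zero_lt_two]
        ring

/-- Modelled on `|x| ^ p` with `p > -1`. -/
structure IsPowerLike (w : ℝ → ℝ) (A : ℝ) : Prop where
  setLIntegral_Ioc_le : ∀ M > 0,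
    ∫⁻ x in Ioc (-M) M, ENNReal.ofReal (w x) ≤ ENNReal.ofReal (A * M * w M)
  le_mul_of_comparable : ∀ x y, 0 < |y| → |x| ≤ 2 * |y| → |y| ≤ 2 * |x| → w x ≤ A * w y

lemma isPowerLike_japWeight {t p : ℝ} (hp : -1 < p) (htp : -1 < t + p) :
    ∃ A > 0, IsPowerLike (japWeight t p) A := by
  have hq : -1 < p + min t 0 := by
    rcases min_cases t 0 with ⟨h, -⟩ | ⟨h, -⟩ <;> linarith
  refine ⟨max (2 / (p + min t 0 + 1)) (2 ^ (|t| + |p|)), lt_max_of_lt_right (by positivity),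
    ⟨fun M hM => ?_, fun x y hy hxy hyx => ?_⟩⟩
  · refine (setLIntegral_japWeight_le hq hM).trans (ENNReal.ofReal_le_ofReal ?_)
    have := japWeight_nonneg t p M
    gcongr
    exact le_max_left _ _
  · refine (japWeight_le_of_comparable hy hxy hyx).trans ?_
    have := japWeight_nonneg t p y
    gcongr
    exact le_max_right _ _

lemma mul_le_ofReal_of_le_ofReal_mul_inv {X Y : ℝ≥0∞} {c₁ c₂ W : ℝ} (hc₁ : 0 ≤ c₁)
    (hX : X ≤ ENNReal.ofReal (c₁ * W)) (hY : Y ≤ ENNReal.ofReal (c₂ * W⁻¹)) :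
    X * Y ≤ ENNReal.ofReal (c₁ * c₂) := by
  rcases le_or_gt W 0 with hW | hW
  · rw [ENNReal.ofReal_of_nonpos (mul_nonpos_of_nonneg_of_nonpos hc₁ hW), nonpos_iff_eq_zero] at hX
    simp [hX]
  · calc X * Y ≤ ENNReal.ofReal (c₁ * W) * ENNReal.ofReal (c₂ * W⁻¹) := by gcongr
      _ = ENNReal.ofReal (c₁ * c₂) := by
        rw [← ENNReal.ofReal_mul (by positivity)]
        congr 1
        field_simp

lemma average_Ioc_le_of_forall_le {f : ℝ → ℝ} {a b c : ℝ} (hab : a < b)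
    (h : ∀ x ∈ Ioc a b, f x ≤ c) :
    ENNReal.ofReal (1 / (b - a)) * ∫⁻ x in Ioc a b, ENNReal.ofReal (f x) ≤ ENNReal.ofReal c := by
  have hL : 0 < b - a := sub_pos.2 hab
  calc ENNReal.ofReal (1 / (b - a)) * ∫⁻ x in Ioc a b, ENNReal.ofReal (f x)
      ≤ ENNReal.ofReal (1 / (b - a)) * ∫⁻ _ in Ioc a b, ENNReal.ofReal c := by
        gcongr ENNReal.ofReal (1 / (b - a)) * ?_
        exact setLIntegral_mono' measurableSet_Ioc fun x hx => ENNReal.ofReal_le_ofReal (h x hx)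
    _ = ENNReal.ofReal c := by
        rw [setLIntegral_const, Real.volume_Ioc, ← ENNReal.ofReal_mul' hL.le,
          ← ENNReal.ofReal_mul (by positivity)]
        congr 1
        field_simp

lemma max_abs_le_abs_add_sub {a b x : ℝ} (hx : x ∈ Icc a b) : max |a| |b| ≤ |x| + (b - a) := by
  obtain ⟨hax, hxb⟩ := hx
  refine max_le (abs_le.2 ⟨?_, ?_⟩) (abs_le.2 ⟨?_, ?_⟩) <;>
    linarith [neg_abs_le x, le_abs_self x]

lemma IsPowerLike.average_Ioc_le {w : ℝ → ℝ} {A : ℝ} (hw : IsPowerLike w A) {a b M : ℝ}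
    (hab : a < b) (hM : 0 < M) (hsub : Ioc a b ⊆ Ioc (-M) M) :
    ENNReal.ofReal (1 / (b - a)) * ∫⁻ x in Ioc a b, ENNReal.ofReal (w x) ≤
      ENNReal.ofReal (A * M / (b - a) * w M) := by
  have hL : 0 < b - a := sub_pos.2 hab
  calc ENNReal.ofReal (1 / (b - a)) * ∫⁻ x in Ioc a b, ENNReal.ofReal (w x)
      ≤ ENNReal.ofReal (1 / (b - a)) * ENNReal.ofReal (A * M * w M) := by
        gcongr
        exact (lintegral_mono_set hsub).trans (hw.setLIntegral_Ioc_le M hM)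
    _ = ENNReal.ofReal (A * M / (b - a) * w M) := by
        rw [← ENNReal.ofReal_mul (by positivity)]
        congr 1
        ring

theorem IsPowerLike.average_mul_average_inv_le {w : ℝ → ℝ} {A B : ℝ} (hw : IsPowerLike w A)
    (hw' : IsPowerLike (fun x => (w x)⁻¹) B) (hA : 0 ≤ A) (hB : 0 ≤ B) {a b : ℝ} (hab : a < b) :
    (ENNReal.ofReal (1 / (b - a)) * ∫⁻ x in Ioc a b, ENNReal.ofReal (w x)) *
      (ENNReal.ofReal (1 / (b - a)) * ∫⁻ x in Ioc a b, ENNReal.ofReal ((w x)⁻¹)) ≤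
        ENNReal.ofReal (4 * A * B) := by
  set L := b - a
  set M := max |a| |b|
  have hL : 0 < L := sub_pos.2 hab
  have hxM : ∀ x ∈ Ioc a b, |x| ≤ M := fun x hx => abs_le_max_abs_abs hx.1.le hx.2
  have hMx : ∀ x ∈ Ioc a b, M ≤ |x| + L := fun x hx =>
    max_abs_le_abs_add_sub (Ioc_subset_Icc_self hx)
  have hM : 0 < M := by
    linarith [le_abs_self b, neg_abs_le a, le_max_left |a| |b|, le_max_right |a| |b|]
  rcases le_or_gt M (2 * L) with hnear | hfar
  · have hsub : Ioc a b ⊆ Ioc (-M) M :=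
      Ioc_subset_Ioc (by linarith [neg_abs_le a, le_max_left |a| |b|])
        (by linarith [le_abs_self b, le_max_right |a| |b|])
    refine (mul_le_ofReal_of_le_ofReal_mul_inv (by positivity) (hw.average_Ioc_le hab hM hsub)
      (hw'.average_Ioc_le hab hM hsub)).trans (ENNReal.ofReal_le_ofReal ?_)
    have hML : M / L ≤ 2 := by rw [div_le_iff₀ hL]; linarith
    calc A * M / L * (B * M / L) = A * B * (M / L) ^ 2 := by ring
      _ ≤ A * B * 2 ^ 2 := by gcongr
      _ = 4 * A * B := by ring
  · have hMpos : 0 < |M| := abs_pos.2 hM.ne'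
    have hcomp : ∀ x ∈ Ioc a b, |x| ≤ 2 * |M| ∧ |M| ≤ 2 * |x| := fun x hx => by
      rw [abs_of_pos hM]
      constructor <;> linarith [hxM x hx, hMx x hx]
    have hX := average_Ioc_le_of_forall_le hab fun x hx =>
      hw.le_mul_of_comparable x M hMpos (hcomp x hx).1 (hcomp x hx).2
    have hY := average_Ioc_le_of_forall_le hab fun x hx =>
      hw'.le_mul_of_comparable x M hMpos (hcomp x hx).1 (hcomp x hx).2
    refine (mul_le_ofReal_of_le_ofReal_mul_inv hA hX hY).trans (ENNReal.ofReal_le_ofReal ?_)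
    nlinarith [mul_nonneg hA hB]

/-- For `−3/2 < s < 1/2`, the weight `ω(β) = ⟨β⟩^s |β|^{1/2}` is a Muckenhoupt `A₂` weight:
the product of the averages of `ω` and `ω⁻¹` over any bounded interval is uniformly bounded. -/
theorem stmt5 (s : ℝ) (hs1 : -(3/2) < s) (hs2 : s < 1/2) :
    ∃ C > (0:ℝ), ∀ a b : ℝ, a < b →
      (ENNReal.ofReal (1/(b-a)) *
          ∫⁻ β in Set.Ioc a b, ENNReal.ofReal (jap β ^ s * |β| ^ ((1:ℝ)/2))) *
      (ENNReal.ofReal (1/(b-a)) *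
          ∫⁻ β in Set.Ioc a b, ENNReal.ofReal ((jap β ^ s * |β| ^ ((1:ℝ)/2))⁻¹)) ≤
        ENNReal.ofReal C := by
  obtain ⟨A, hA, hw⟩ := isPowerLike_japWeight (t := s) (p := 1 / 2) (by norm_num) (by linarith)
  obtain ⟨B, hB, hw'⟩ :=
    isPowerLike_japWeight (t := -s) (p := -(1 / 2)) (by norm_num) (by linarith)
  rw [← inv_japWeight] at hw'
  exact ⟨4 * A * B, by positivity, fun a b hab =>
    hw.average_mul_average_inv_le hw' hA.le hB.le hab⟩
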